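/- arXiv:2505.07579 — 2 statements merged into one kernel-verified Lean document; each statement's English description precedes it below -/
import Mathlib

section
/- Let A be a deterministic truthful SWAC and let w < v be valuations in V with X(w) > X(v) (allocations under truthful bids). Then agent w would strictly benefit from bidding v but is filtered out; that is, u(w, v) > u(w, w) and P(v) ≥ F(v) > w. -/
open MeasureTheory Filter

namespace RentalGame

/-- The *filter* of a payment schedule: the highest cumulative average payment
over all prefixes (`0` for the empty schedule). -/
noncomputable def filt (l : List ℝ) : ℝ :=
  ((List.range l.length).map (fun k => (l.take (k + 1)).sum / ((k : ℝ) + 1))).foldr max 0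

/-- Utility of an agent with valuation `v` facing payment schedule `l`:
allocation times valuation minus total payment. -/
noncomputable def util (l : List ℝ) (v : ℝ) : ℝ := (l.length : ℝ) * v - l.sum

/-- Gross seller reward `Σ_i g(v, p_i)` from schedule `l` and valuation `v`. -/
noncomputable def gross (g : ℝ → ℝ → ℝ) (v : ℝ) (l : List ℝ) : ℝ := (l.map (g v)).sum

/-- A stagewise auction with seller cost (SWAC) with `n` units and valuation set
`V ⊆ [0,∞)`.  It consists of a bidding set `B`, a payment schedule for every bid,
and the bid chosen by each agent valuation, which is required to be stagewise-IR
(its filter does not exceed the valuation) and utility-maximizing among all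
allowed bids. -/
structure SWAC (n : ℕ) (V : Set ℝ) where
  B : Set ℝ
  sched : ℝ → List ℝ
  bid : ℝ → ℝ
  len_le : ∀ b ∈ B, (sched b).length ≤ n
  pay_nonneg : ∀ b ∈ B, ∀ p ∈ sched b, 0 ≤ p
  bid_mem : ∀ v ∈ V, bid v ∈ B
  bid_IR : ∀ v ∈ V, filt (sched (bid v)) ≤ v
  bid_opt : ∀ v ∈ V, ∀ b ∈ B, filt (sched b) ≤ v →
    util (sched b) v ≤ util (sched (bid v)) v

namespace SWAC

variable {n : ℕ} {V : Set ℝ}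

/-- Allocation of a bid. -/
def X (A : SWAC n V) (b : ℝ) : ℕ := (A.sched b).length

/-- Total payment of a bid. -/
noncomputable def P (A : SWAC n V) (b : ℝ) : ℝ := (A.sched b).sum

/-- Filter of a bid. -/
noncomputable def F (A : SWAC n V) (b : ℝ) : ℝ := filt (A.sched b)

/-- Utility of valuation `v` from bid `b`. -/
noncomputable def u (A : SWAC n V) (v b : ℝ) : ℝ := util (A.sched b) v

/-- Net seller reward from valuation `v` bidding `b`, w.r.t. reward `g` and cost `c`. -/
noncomputable def r (A : SWAC n V) (g : ℝ → ℝ → ℝ) (c : ℕ → ℝ) (v b : ℝ) : ℝ :=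
  gross g v (A.sched b) - c (A.X b)

/-- Net seller reward from valuation `v` under its chosen (optimal) bid. -/
noncomputable def R (A : SWAC n V) (g : ℝ → ℝ → ℝ) (c : ℕ → ℝ) (v : ℝ) : ℝ :=
  A.r g c v (A.bid v)

/-- Allocation of valuation `v` under its chosen bid. -/
def XA (A : SWAC n V) (v : ℝ) : ℕ := A.X (A.bid v)

/-- Total payment of valuation `v` under its chosen bid. -/
noncomputable def PA (A : SWAC n V) (v : ℝ) : ℝ := A.P (A.bid v)

end SWAC

/-- Ties in the agent's utility are broken in favor of the seller,
w.r.t. reward `g` and cost `c`. -/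
def TieFavor {n : ℕ} {V : Set ℝ} (g : ℝ → ℝ → ℝ) (c : ℕ → ℝ) (A : SWAC n V) : Prop :=
  ∀ v ∈ V, ∀ b ∈ A.B, filt (A.sched b) ≤ v →
    util (A.sched b) v = util (A.sched (A.bid v)) v →
    A.r g c v b ≤ A.r g c v (A.bid v)

/-- Expected seller reward `E[A] = 𝔼_{v ∼ D}[R_A(v)]`. -/
noncomputable def ER {n : ℕ} {V : Set ℝ} (D : Measure ℝ) (g : ℝ → ℝ → ℝ) (c : ℕ → ℝ)
    (A : SWAC n V) : ℝ :=
  ∫ v, A.R g c v ∂D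

/-- A SWAC is truthful if the bidding set is `V` and every agent bids its valuation. -/
def Truthful {n : ℕ} {V : Set ℝ} (A : SWAC n V) : Prop :=
  A.B = V ∧ ∀ v ∈ V, A.bid v = v

/-- A SWAC is optimal for the setting `(n, D, g, c)` if it maximizes the expected
reward among all SWACs for this setting. -/
def Optimal {n : ℕ} {V : Set ℝ} (D : Measure ℝ) (g : ℝ → ℝ → ℝ) (c : ℕ → ℝ)
    (A : SWAC n V) : Prop :=
  TieFavor g c A ∧ ∀ A' : SWAC n V, TieFavor g c A' → ER D g c A' ≤ ER D g c A

/-- A SWAC is fixed-rate if every bid is charged the same payment on every day. -/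
def FixedRate {n : ℕ} {V : Set ℝ} (A : SWAC n V) : Prop :=
  ∀ b ∈ A.B, ∃ p : ℝ, A.sched b = List.replicate (A.sched b).length p

/-- Strong allocation monotonicity. -/
def StronglyAllocMono {n : ℕ} {V : Set ℝ} (A : SWAC n V) : Prop :=
  ∀ w ∈ V, ∀ v ∈ V, w < v → A.XA w ≤ A.XA v

/-- Allocation monotonicity, up to a `D`-null set of valuations. -/
def AllocMono {n : ℕ} {V : Set ℝ} (D : Measure ℝ) (A : SWAC n V) : Prop :=
  ∃ S : Set ℝ, D S = 0 ∧ ∀ w ∈ V \ S, ∀ v ∈ V \ S, w < v → A.XA w ≤ A.XA v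

/-- Weak allocation monotonicity: up to a `D`-null set, allocation is monotone on
pairs with distinct seller rewards. -/
def WeaklyAllocMono {n : ℕ} {V : Set ℝ} (D : Measure ℝ) (g : ℝ → ℝ → ℝ) (c : ℕ → ℝ)
    (A : SWAC n V) : Prop :=
  ∃ S : Set ℝ, D S = 0 ∧ ∀ w ∈ V \ S, ∀ v ∈ V \ S, w < v →
    A.R g c w ≠ A.R g c v → A.XA w ≤ A.XA v

/-- Reward monotonicity, up to a `D`-null set of valuations. -/
def RewardMono {n : ℕ} {V : Set ℝ} (D : Measure ℝ) (g : ℝ → ℝ → ℝ) (c : ℕ → ℝ)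
    (A : SWAC n V) : Prop :=
  ∃ S : Set ℝ, D S = 0 ∧ ∀ w ∈ V \ S, ∀ v ∈ V \ S, w < v → A.R g c w ≤ A.R g c v

lemma foldr_max_le_aux {l : List ℝ} {a : ℝ} (h0 : 0 ≤ a) (h : ∀ x ∈ l, x ≤ a) :
    l.foldr max 0 ≤ a := by
  induction l with
  | nil => simpa
  | cons x xs ih =>
    simp only [List.foldr_cons]
    exact max_le (h x (by simp)) (ih fun y hy => h y (by simp [hy]))

lemma filt_le_sum {l : List ℝ} (h : ∀ p ∈ l, 0 ≤ p) : filt l ≤ l.sum := by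
  apply foldr_max_le_aux (List.sum_nonneg h)
  intro x hx
  obtain ⟨k, _, rfl⟩ := List.mem_map.1 hx
  have h1 : (1 : ℝ) ≤ (k : ℝ) + 1 := by linarith [Nat.cast_nonneg (α := ℝ) k]
  have hnum : 0 ≤ (l.take (k + 1)).sum :=
    List.sum_nonneg fun p hp => h p (List.take_subset _ _ hp)
  have hle : (l.take (k + 1)).sum ≤ l.sum := by
    conv_rhs => rw [← l.take_append_drop (k + 1)]
    rw [List.sum_append]
    have : 0 ≤ (l.drop (k + 1)).sum :=
      List.sum_nonneg fun p hp => h p (List.drop_subset _ _ hp)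
    linarith
  calc (l.take (k + 1)).sum / ((k : ℝ) + 1) ≤ (l.take (k + 1)).sum :=
        div_le_self hnum h1
    _ ≤ l.sum := hle

/-- In a deterministic truthful SWAC, if `w < v` are valuations in
`V` with `X(w) > X(v)`, then agent `w` would strictly benefit from bidding `v` but
is filtered out: `u(w, v) > u(w, w)` and `P(v) ≥ F(v) > w`. -/
theorem nonmonotone_alloc_means_filter
    {n : ℕ} {V : Set ℝ} (hV : ∀ v ∈ V, 0 ≤ v)
    (A : SWAC n V) (hA : Truthful A)
    {w v : ℝ} (hw : w ∈ V) (hv : v ∈ V) (hwv : w < v)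
    (hX : A.XA v < A.XA w) :
    A.u w w < A.u w v ∧ A.F v ≤ A.P v ∧ w < A.F v := by
  obtain ⟨hB, hbid⟩ := hA
  have hbw := hbid w hw
  have hbv := hbid v hv
  have hwB : w ∈ A.B := by rw [hB]; exact hw
  have hvB : v ∈ A.B := by rw [hB]; exact hv
  -- IR of w's bid, and optimality of v's bid against bid w
  have hIRw : filt (A.sched w) ≤ w := by have := A.bid_IR w hw; rwa [hbw] at this
  have hopt : util (A.sched w) v ≤ util (A.sched v) v := by
    have := A.bid_opt v hv w hwB (le_trans hIRw hwv.le)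
    rwa [hbv] at this
  have hXlt : (A.sched v).length < (A.sched w).length := by
    have : A.XA v < A.XA w := hX
    simpa [SWAC.XA, SWAC.X, hbw, hbv] using this
  have hXlt' : ((A.sched v).length : ℝ) < ((A.sched w).length : ℝ) := by
    exact_mod_cast hXlt
  -- strict utility gain for w from bidding v
  have hstrict : util (A.sched w) w < util (A.sched v) w := by
    unfold util at hopt ⊢
    nlinarith [hXlt', hwv]
  have h1 : A.u w w < A.u w v := by
    simpa [SWAC.u, hbw, hbv] using hstrict
  refine ⟨h1, ?_, ?_⟩
  · have := filt_le_sum (l := A.sched v) (A.pay_nonneg v hvB)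
    simpa [SWAC.F, SWAC.P, hbv] using this
  · by_contra hle
    push_neg at hle
    have hle' : filt (A.sched v) ≤ w := by simpa [SWAC.F, hbv] using hle
    have := A.bid_opt w hw v hvB hle'
    rw [hbw] at this
    exact absurd this (not_le.2 hstrict)

end RentalGame
end

section
/- Consider the SWAC setting S_n with valuation set V = [0,1], D the uniform distribution on [0,1], consumer-surplus reward g(v,p) = v − p, and cost equal to the over-time cost function of the n-day rental game with i.i.d. uniform [0,1] valuations. Then: (1) among fixed-rate SWACs it is w.l.o.g. optimal to sell exactly one unit to every arriving agent for free, achieving expected reward 1/2; (2) the optimal n-day rental reward satisfies R_n ≥ n/2; and (3) a rental mechanism that is optimal among fixed-rate rental mechanisms has expected reward exactly n/2. -/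
open MeasureTheory Filter

namespace RentalGame

/-- A rental mechanism: for every horizon `h` and history of past bids, a SWAC with
`h` units that negotiates with the arriving agent, together with a designer-chosen
cost function for that SWAC (which governs the agent's tie-breaking in favor of
the seller). -/
structure Mech (V : Set ℝ) (g : ℝ → ℝ → ℝ) where
  au : (h : ℕ) → List ℝ → SWAC h V
  mc : (h : ℕ) → List ℝ → ℕ → ℝ
  tie : ∀ (h : ℕ) (hist : List ℝ), TieFavor g (mc h hist) (au h hist)

/-- Expected total reward of a rental mechanism from a given horizon and history:
the arriving agent (drawn from `D h`) bids in the current SWAC, the designer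
collects the gross reward `Σ_i g(v, p_i)` over the rented days, and the game
continues at horizon `h − max(x, 1)` once the asset is available again. -/
noncomputable def mechER (V : Set ℝ) (g : ℝ → ℝ → ℝ) (D : ℕ → Measure ℝ) (M : Mech V g) :
    ℕ → List ℝ → ℝ
  | 0, _ => 0
  | h + 1, hist =>
    ∫ v,
      (gross g v ((M.au (h + 1) hist).sched ((M.au (h + 1) hist).bid v)) +
        mechER V g D M ((h + 1) - max ((M.au (h + 1) hist).XA v) 1)
          (hist ++ [(M.au (h + 1) hist).bid v])) ∂(D (h + 1))
  termination_by h _ => h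
  decreasing_by
    exact Nat.sub_lt (Nat.succ_pos _) (lt_of_lt_of_le Nat.one_pos (le_max_right _ _))

/-- `R^{D⃗,g}_h`: the expected reward of an optimal rental mechanism for the last
`h` horizons. -/
noncomputable def optRental (V : Set ℝ) (g : ℝ → ℝ → ℝ) (D : ℕ → Measure ℝ) (h : ℕ) : ℝ :=
  sSup {x : ℝ | ∃ M : Mech V g, x = mechER V g D M h []}

/-- The over-time cost function
`c^{D⃗}_{h,g}(x) = R^{D⃗,g}_{h−1} − R^{D⃗,g}_{h−max{x,1}}`. -/
noncomputable def overTimeCost (V : Set ℝ) (g : ℝ → ℝ → ℝ) (D : ℕ → Measure ℝ)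
    (h : ℕ) (x : ℕ) : ℝ :=
  optRental V g D (h - 1) - optRental V g D (h - max x 1)

/-- The uniform distribution on `[0,1]`. -/
noncomputable def unif01 : Measure ℝ := volume.restrict (Set.Icc (0 : ℝ) 1)

/-- Consumer surplus reward `g(v,p) = v − p`. -/
noncomputable def csg : ℝ → ℝ → ℝ := fun v p => v - p

/-!
For a fixed-rate SWAC on `[0,1]` the agent's utility `u` under its chosen bid is monotone with
`u 0 = 0` and `u v - u w ≤ m v * (v - w)` for `w ≤ v`, where `m v = max (x v) 1` counts the
days the asset is occupied. Heuristically `m v ≥ v * (u v / v) + (1 - v) * u' v`, and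
integrating by parts gives `∫ m ≥ 2 ∫ u`; the proof runs this with difference quotients of
step `δ → 0`. Prefixing any rental mechanism with one free day earns `1/2` more, so
`R (h+1) ≥ R h + 1/2` and the over-time cost of `x` days is at least `(max x 1 - 1) / 2`.
Hence the expected consumer surplus minus cost of a fixed-rate SWAC is at most `1/2`, which
one free day attains, and by induction on the horizon a fixed-rate rental mechanism earns at
most `h/2`, which free single days attain.
-/

open Set Topology

theorem foldr_max_zero_replicate {L : ℕ} (hL : L ≠ 0) {p : ℝ} (hp : 0 ≤ p) :
    (List.replicate L p).foldr max 0 = p := by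
  obtain ⟨k, rfl⟩ := Nat.exists_eq_succ_of_ne_zero hL
  induction k with
  | zero => simpa using hp
  | succ k ih => simpa [List.replicate_succ] using ih

theorem filt_replicate {L : ℕ} (hL : L ≠ 0) {p : ℝ} (hp : 0 ≤ p) :
    filt (List.replicate L p) = p := by
  have hprefix : (List.range L).map (fun k => ((List.replicate L p).take (k + 1)).sum /
      ((k : ℝ) + 1)) = List.replicate L p := by
    refine List.eq_replicate_iff.2 ⟨by simp, fun x hx => ?_⟩
    obtain ⟨k, hk, rfl⟩ := List.mem_map.1 hx
    rw [List.take_replicate, min_eq_left (List.mem_range.1 hk), List.sum_replicate, nsmul_eq_mul]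
    push_cast
    field_simp
  rw [filt, List.length_replicate, hprefix, foldr_max_zero_replicate hL hp]

theorem filt_replicate_zero (L : ℕ) : filt (List.replicate L 0) = 0 := by
  rcases eq_or_ne L 0 with rfl | hL
  · simp [filt]
  · exact filt_replicate hL le_rfl

theorem gross_csg (v : ℝ) (l : List ℝ) : gross csg v l = util l v := by
  induction l with
  | nil => simp [gross, util]
  | cons a l ih =>
    simp_all [gross, util, csg]
    ring

instance : IsProbabilityMeasure unif01 :=
  ⟨by simp [unif01]⟩

theorem integral_unif01 (f : ℝ → ℝ) : ∫ v, f v ∂unif01 = ∫ v in (0 : ℝ)..1, f v := by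
  rw [intervalIntegral.integral_of_le zero_le_one, ← integral_Icc_eq_integral_Ioc, unif01]

theorem integrable_unif01_iff {f : ℝ → ℝ} :
    Integrable f unif01 ↔ IntervalIntegrable f volume 0 1 := by
  rw [intervalIntegrable_iff_integrableOn_Ioc_of_le zero_le_one,
    ← integrableOn_Icc_iff_integrableOn_Ioc, IntegrableOn, unif01]

theorem integral_id_unif01 : ∫ v, v ∂unif01 = 1 / 2 := by
  simp [integral_unif01]

theorem integral_unif01_le_of_le {f : ℝ → ℝ} {C : ℝ} (hC : 0 ≤ C)
    (hf : ∀ v ∈ Icc (0 : ℝ) 1, f v ≤ C) : ∫ v, f v ∂unif01 ≤ C := by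
  by_cases hint : Integrable f unif01
  · calc ∫ v, f v ∂unif01 ≤ ∫ _, C ∂unif01 :=
          integral_mono_ae hint (integrable_const C)
            ((ae_restrict_iff' measurableSet_Icc).2 (.of_forall hf))
      _ = C := by simp
  · rwa [integral_undef hint]

-- Summation by parts: the right side equals `δ ∫₀¹ u + ∫_{1-δ}^1 (1 - δ - s) u s`,
-- and the last term is at least `-δ ^ 2 * u 1`.
theorem integral_one_sub_mul_sub_shift_ge {u : ℝ → ℝ} (hu : Monotone u)
    (hu0 : ∀ s ≤ 0, u s = 0) {δ : ℝ} (hδ : 0 < δ) :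
    δ * (∫ v in (0 : ℝ)..1, u v) - δ ^ 2 * u 1 ≤
      ∫ v in (0 : ℝ)..1, (1 - v) * (u v - u (v - δ)) := by
  set F : ℝ → ℝ := fun s => (1 - δ - s) * u s
  have hF : ∀ a b, IntervalIntegrable F volume a b := fun a b =>
    hu.intervalIntegrable.continuousOn_mul (by fun_prop)
  have hu_shift : Monotone fun v => u (v - δ) := fun a b hab => hu (by linarith)
  have hsplit : ∫ v in (0 : ℝ)..1, (1 - v) * (u v - u (v - δ))
      = (∫ v in (0 : ℝ)..1, (1 - v) * u v) - ∫ v in (0 : ℝ)..1, (1 - v) * u (v - δ) := by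
    rw [← intervalIntegral.integral_sub (hu.intervalIntegrable.continuousOn_mul (by fun_prop))
      (hu_shift.intervalIntegrable.continuousOn_mul (by fun_prop))]
    congr with v
    ring
  have hshift : ∫ v in (0 : ℝ)..1, (1 - v) * u (v - δ) = ∫ s in -δ..(1 - δ), F s := by
    rw [← zero_sub, ← intervalIntegral.integral_comp_sub_right]
    congr with v
    ring
  have hweight : ∫ v in (0 : ℝ)..1, (1 - v) * u v
      = (∫ s in (0 : ℝ)..1, F s) + δ * ∫ v in (0 : ℝ)..1, u v := by
    rw [← intervalIntegral.integral_const_mul, ← intervalIntegral.integral_add (hF 0 1)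
      (hu.intervalIntegrable.const_mul δ)]
    congr with v
    ring
  have hleft : ∫ s in (0 : ℝ)..(-δ), F s = 0 := by
    refine intervalIntegral.integral_zero_ae (.of_forall fun s hs => ?_)
    rw [uIoc_of_ge (by linarith)] at hs
    simp [F, hu0 s hs.2]
  have hright : ∫ s in (1 - δ)..1, (-δ * u 1) ≤ ∫ s in (1 - δ)..1, F s := by
    refine intervalIntegral.integral_mono_on (by linarith) intervalIntegrable_const (hF _ _)
      fun s hs => ?_
    have hus : 0 ≤ u s := by
      rcases le_total s 0 with hs0 | hs0
      · exact (hu0 s hs0).ge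
      · exact (hu0 0 le_rfl).ge.trans (hu hs0)
    have hus1 : u s ≤ u 1 := hu hs.2
    simp only [F]
    nlinarith [hs.1, hs.2]
  have hcomm := intervalIntegral.integral_interval_sub_interval_comm (hF 0 1) (hF (-δ) (1 - δ))
    (hF 0 (-δ))
  rw [intervalIntegral.integral_const, smul_eq_mul] at hright
  rw [intervalIntegral.integral_symm (1 - δ) 1, hleft] at hcomm
  rw [hsplit, hshift, hweight]
  nlinarith

theorem intervalIntegral_le_zero_of_le_sub_half {u m φ : ℝ → ℝ} (hu : MonotoneOn u (Icc 0 1))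
    (hu0 : u 0 = 0) (hm : ∀ v ∈ Icc (0 : ℝ) 1, 0 ≤ m v)
    (hlip : ∀ v ∈ Icc (0 : ℝ) 1, ∀ w ∈ Icc (0 : ℝ) 1, w ≤ v →
      u v - u w ≤ m v * (v - w))
    (hφ : IntervalIntegrable φ volume 0 1)
    (hφu : ∀ v ∈ Icc (0 : ℝ) 1, φ v ≤ u v - m v / 2) :
    ∫ v in (0 : ℝ)..1, φ v ≤ 0 := by
  -- clamping to `[0,1]` extends `u` by `0` to the left, so that shifts by `δ` make sense
  set ue : ℝ → ℝ := fun s => u (max 0 (min s 1))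
  have hue : Monotone ue := fun a b hab =>
    hu ⟨le_max_left _ _, max_le zero_le_one (min_le_right _ _)⟩
      ⟨le_max_left _ _, max_le zero_le_one (min_le_right _ _)⟩
      (max_le_max le_rfl (min_le_min_right 1 hab))
  have hue0 : ∀ s ≤ 0, ue s = 0 := fun s hs => by
    simp [ue, min_eq_left (hs.trans zero_le_one), hs, hu0]
  have hueu : ∀ v ∈ Icc (0 : ℝ) 1, ue v = u v := fun v hv => by
    simp [ue, hv.1, hv.2]
  have hbound : ∀ δ > (0 : ℝ), 2 * ∫ v in (0 : ℝ)..1, φ v ≤ δ * u 1 := by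
    intro δ hδ
    -- `δ m v = v (δ m v) + (1 - v) (δ m v)` dominates `δ u v + (1 - v) (u v - u (v - δ))`
    have hpt : ∀ v ∈ Icc (0 : ℝ) 1,
        δ * (2 * φ v) ≤ δ * ue v - (1 - v) * (ue v - ue (v - δ)) := by
      intro v hv
      set w := max 0 (v - δ)
      have hw : w ∈ Icc (0 : ℝ) 1 :=
        ⟨le_max_left _ _, max_le zero_le_one (by linarith [hv.2])⟩
      have huew : ue (v - δ) = u w := by
        simp [ue, w, min_eq_left (by linarith [hv.2] : v - δ ≤ 1)]
      rw [hueu v hv, huew]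
      have hstep := hlip v hv w hw (max_le hv.1 (by linarith))
      have hgrowth := hlip v hv 0 ⟨le_rfl, zero_le_one⟩ hv.1
      have hvw : v - w ≤ δ := by linarith [le_max_right 0 (v - δ)]
      rw [hu0] at hgrowth
      nlinarith [mul_le_mul_of_nonneg_left hvw (hm v hv), hφu v hv, hm v hv, hv.2]
    have hintegrated : δ * (2 * ∫ v in (0 : ℝ)..1, φ v) ≤ δ * (∫ v in (0 : ℝ)..1, ue v) -
        ∫ v in (0 : ℝ)..1, (1 - v) * (ue v - ue (v - δ)) := by
      have hue_shift : Monotone fun v => ue (v - δ) := fun a b hab => hue (by linarith)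
      have hdiff := (hue.intervalIntegrable.sub hue_shift.intervalIntegrable).continuousOn_mul
        (μ := volume) (a := 0) (b := 1) (g := fun v => 1 - v) (by fun_prop)
      have hmono := intervalIntegral.integral_mono_on zero_le_one (hφ.const_mul (δ * 2))
        ((hue.intervalIntegrable.const_mul δ).sub hdiff)
        (fun v hv => (mul_assoc δ 2 (φ v)).symm ▸ hpt v hv)
      rwa [intervalIntegral.integral_sub (hue.intervalIntegrable.const_mul δ) hdiff,
        intervalIntegral.integral_const_mul, intervalIntegral.integral_const_mul,
        mul_assoc] at hmono
    have := integral_one_sub_mul_sub_shift_ge hue hue0 hδ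
    rw [hueu 1 ⟨zero_le_one, le_rfl⟩] at this
    nlinarith
  refine ge_of_tendsto (f := fun δ : ℝ => δ * u 1 / 2) (x := 𝓝[>] 0) ?_ ?_
  · exact tendsto_nhdsWithin_of_tendsto_nhds
      (((continuous_mul_const (u 1)).div_const 2).tendsto' 0 0 (by simp))
  · filter_upwards [self_mem_nhdsWithin] with δ hδ
    linarith [hbound δ hδ]

namespace SWAC

variable {n : ℕ} {V : Set ℝ} (A : SWAC n V)

noncomputable def uA (v : ℝ) : ℝ := A.u v (A.bid v)

theorem u_le_X_mul {b : ℝ} (hb : b ∈ A.B) (v : ℝ) : A.u v b ≤ A.X b * v := by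
  have : 0 ≤ (A.sched b).sum := List.sum_nonneg fun p hp => A.pay_nonneg b hb p hp
  simp only [u, util, X]
  linarith

theorem uA_monotoneOn : MonotoneOn A.uA V := by
  intro w hw v hv hwv
  calc A.uA w ≤ A.u v (A.bid w) := by simp only [uA, u, util]; gcongr
    _ ≤ A.uA v := A.bid_opt v hv _ (A.bid_mem w hw) ((A.bid_IR w hw).trans hwv)

theorem R_csg (c : ℕ → ℝ) (v : ℝ) : A.R csg c v = A.uA v - c (A.XA v) := by
  rw [R, r, gross_csg]
  rfl

end SWAC

namespace FixedRate

variable {n : ℕ} {V : Set ℝ} {A : SWAC n V}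

theorem u_eq (hA : FixedRate A) {b : ℝ} (hb : b ∈ A.B) (v : ℝ) :
    A.u v b = A.X b * (v - A.F b) := by
  obtain ⟨p, hp⟩ := hA b hb
  rcases eq_or_ne (A.X b) 0 with h0 | hL
  · simp [SWAC.u, util, SWAC.X, List.length_eq_zero_iff.1 h0] at h0 ⊢
  · have hp0 : 0 ≤ p := A.pay_nonneg b hb p (hp ▸ List.mem_replicate.2 ⟨hL, rfl⟩)
    simp only [SWAC.u, util, SWAC.F, SWAC.X] at hL ⊢
    rw [hp, filt_replicate (by simpa using hL) hp0]
    simp [List.sum_replicate]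
    ring

theorem uA_nonneg (hA : FixedRate A) {v : ℝ} (hv : v ∈ V) : 0 ≤ A.uA v := by
  rw [SWAC.uA, hA.u_eq (A.bid_mem v hv)]
  exact mul_nonneg (Nat.cast_nonneg _) (sub_nonneg.2 (A.bid_IR v hv))

theorem uA_zero (hA : FixedRate A) (h0 : 0 ∈ V) : A.uA 0 = 0 :=
  le_antisymm (by simpa [SWAC.uA] using A.u_le_X_mul (A.bid_mem 0 h0) 0) (hA.uA_nonneg h0)

theorem uA_sub_le (hA : FixedRate A) {w v : ℝ} (hw : w ∈ V) (hv : v ∈ V) :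
    A.uA v - A.uA w ≤ A.XA v * (v - w) := by
  have hbv := A.bid_mem v hv
  have huv : A.uA v = A.XA v * (v - A.F (A.bid v)) := hA.u_eq hbv v
  have hX : (0 : ℝ) ≤ A.XA v := Nat.cast_nonneg _
  by_cases hF : A.F (A.bid v) ≤ w
  · -- the bid of `v` is available to `w`
    have hopt : A.u w (A.bid v) ≤ A.uA w := A.bid_opt w hw _ hbv hF
    rw [hA.u_eq hbv] at hopt
    rw [huv]
    unfold SWAC.XA
    nlinarith
  · rw [huv]
    nlinarith [hA.uA_nonneg hw]

theorem integral_le_add_half {A : SWAC n (Icc (0 : ℝ) 1)} (hA : FixedRate A) {C : ℝ}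
    (hC : 0 ≤ C) {φ : ℝ → ℝ} (hφ : ∀ v ∈ Icc (0 : ℝ) 1,
      φ v ≤ C + A.uA v - (((max (A.XA v) 1 : ℕ) : ℝ) - 1) / 2) :
    ∫ v, φ v ∂unif01 ≤ C + 1 / 2 := by
  by_cases hint : Integrable φ unif01
  · have hlip : ∀ v ∈ Icc (0 : ℝ) 1, ∀ w ∈ Icc (0 : ℝ) 1, w ≤ v →
        A.uA v - A.uA w ≤ ((max (A.XA v) 1 : ℕ) : ℝ) * (v - w) := fun v hv w hw hwv =>
      (hA.uA_sub_le hw hv).trans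
        (mul_le_mul_of_nonneg_right (by exact_mod_cast le_max_left _ _) (sub_nonneg.2 hwv))
    have key := intervalIntegral_le_zero_of_le_sub_half (φ := fun v => φ v - (C + 1 / 2))
      A.uA_monotoneOn (hA.uA_zero ⟨le_rfl, zero_le_one⟩) (fun _ _ => Nat.cast_nonneg _) hlip
      (integrable_unif01_iff.1 (hint.sub (integrable_const _)))
      (fun v hv => by linarith [hφ v hv])
    rw [← integral_unif01, integral_sub hint (integrable_const _)] at key
    simp only [integral_const, probReal_univ, one_smul] at key
    linarith
  · rw [integral_undef hint]
    positivity

end FixedRate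

section Rental

local notation "𝕀" => Set.Icc (0 : ℝ) 1
local notation "𝓔" => mechER (Set.Icc (0 : ℝ) 1) csg (fun _ => unif01)
local notation "𝓡" => optRental (Set.Icc (0 : ℝ) 1) csg (fun _ => unif01)

theorem mechER_zero (M : Mech 𝕀 csg) (hist : List ℝ) : 𝓔 M 0 hist = 0 := by
  rw [mechER]

theorem mechER_succ (M : Mech 𝕀 csg) (h : ℕ) (hist : List ℝ) :
    𝓔 M (h + 1) hist = ∫ v, ((M.au (h + 1) hist).uA v +
      𝓔 M (h + 1 - max ((M.au (h + 1) hist).XA v) 1) (hist ++ [(M.au (h + 1) hist).bid v]))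
      ∂unif01 := by
  rw [mechER]
  simp only [gross_csg]
  rfl

theorem mechER_le (M : Mech 𝕀 csg) (h : ℕ) (hist : List ℝ) : 𝓔 M h hist ≤ h := by
  induction h using Nat.strong_induction_on generalizing hist with
  | _ h ih =>
  cases h with
  | zero => simp [mechER_zero]
  | succ h =>
    rw [mechER_succ]
    set A := M.au (h + 1) hist
    refine integral_unif01_le_of_le (by positivity) fun v hv => ?_
    have hX : A.XA v ≤ h + 1 := A.len_le _ (A.bid_mem v hv)
    have hrest := ih (h + 1 - max (A.XA v) 1) (by omega) (hist ++ [A.bid v])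
    have hu : A.uA v ≤ A.XA v * v := A.u_le_X_mul (A.bid_mem v hv) v
    have hXm : (A.XA v : ℝ) ≤ ((max (A.XA v) 1 : ℕ) : ℝ) := by
      exact_mod_cast le_max_left _ _
    rw [Nat.cast_sub (max_le hX (by omega))] at hrest
    nlinarith [hv.2, Nat.cast_nonneg (α := ℝ) (A.XA v)]

theorem mechER_le_half (M : Mech 𝕀 csg) (hM : ∀ h hist, FixedRate (M.au h hist)) (h : ℕ)
    (hist : List ℝ) : 𝓔 M h hist ≤ h / 2 := by
  induction h using Nat.strong_induction_on generalizing hist with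
  | _ h ih =>
  cases h with
  | zero => simp [mechER_zero]
  | succ h =>
    rw [mechER_succ]
    refine ((hM (h + 1) hist).integral_le_add_half (C := h / 2) (by positivity)
      fun v hv => ?_).trans_eq (by push_cast; ring)
    set A := M.au (h + 1) hist
    have hX : A.XA v ≤ h + 1 := A.len_le _ (A.bid_mem v hv)
    have hrest := ih (h + 1 - max (A.XA v) 1) (by omega) (hist ++ [A.bid v])
    rw [Nat.cast_sub (max_le hX (by omega)), Nat.cast_succ] at hrest
    linarith

noncomputable def freeDay (h : ℕ) : SWAC h 𝕀 where
  B := 𝕀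
  sched _ := List.replicate (min h 1) 0
  bid v := v
  len_le _ _ := by simp
  pay_nonneg _ _ _ hp := (List.eq_of_mem_replicate hp).ge
  bid_mem _ hv := hv
  bid_IR _ hv := (filt_replicate_zero _).trans_le hv.1
  bid_opt _ _ _ _ _ := le_rfl

theorem freeDay_tieFavor (h : ℕ) (g : ℝ → ℝ → ℝ) (c : ℕ → ℝ) :
    TieFavor g c (freeDay h) :=
  fun _ _ _ _ _ _ => le_rfl

theorem freeDay_fixedRate (h : ℕ) : FixedRate (freeDay h) :=
  fun _ _ => ⟨0, by simp [freeDay]⟩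

theorem freeDay_sched {h : ℕ} (hh : 1 ≤ h) (b : ℝ) : (freeDay h).sched b = [0] := by
  simp [freeDay, min_eq_right hh]

theorem freeDay_XA {h : ℕ} (hh : 1 ≤ h) (v : ℝ) : (freeDay h).XA v = 1 := by
  simp [SWAC.XA, SWAC.X, freeDay_sched hh]

theorem freeDay_uA {h : ℕ} (hh : 1 ≤ h) (v : ℝ) : (freeDay h).uA v = v := by
  simp [SWAC.uA, SWAC.u, util, freeDay_sched hh]

theorem mechER_succ_of_au_eq_freeDay (M : Mech 𝕀 csg) {h : ℕ} {hist : List ℝ}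
    (hau : M.au (h + 1) hist = freeDay (h + 1)) {c : ℝ} (hc : ∀ v, 𝓔 M h (hist ++ [v]) = c) :
    𝓔 M (h + 1) hist = 1 / 2 + c := by
  rw [mechER_succ, hau]
  simp only [freeDay_uA le_add_self, freeDay_XA le_add_self, max_self, Nat.add_sub_cancel]
  have hc' : ∀ v, 𝓔 M h (hist ++ [(freeDay (h + 1)).bid v]) = c := fun v => hc _
  simp only [hc']
  have hid : Integrable (fun v : ℝ => v) unif01 :=
    integrable_unif01_iff.2 intervalIntegral.intervalIntegrable_id
  rw [integral_add hid (integrable_const c), integral_id_unif01]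
  simp

noncomputable def freeDayMech : Mech 𝕀 csg where
  au h _ := freeDay h
  mc _ _ _ := 0
  tie h _ := freeDay_tieFavor h _ _

theorem mechER_freeDayMech (h : ℕ) (hist : List ℝ) : 𝓔 freeDayMech h hist = h / 2 := by
  induction h generalizing hist with
  | zero => simp [mechER_zero]
  | succ h ih =>
    rw [mechER_succ_of_au_eq_freeDay _ rfl fun v => ih _]
    push_cast
    ring

noncomputable def Mech.consFreeDay (M : Mech 𝕀 csg) : Mech 𝕀 csg where
  au h
    | [] => freeDay h
    | _ :: hist => M.au h hist
  mc h
    | [] => 0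
    | _ :: hist => M.mc h hist
  tie h
    | [] => freeDay_tieFavor h _ _
    | _ :: hist => M.tie h hist

theorem mechER_consFreeDay_cons (M : Mech 𝕀 csg) (h : ℕ) (a : ℝ) (hist : List ℝ) :
    𝓔 M.consFreeDay h (a :: hist) = 𝓔 M h hist := by
  induction h using Nat.strong_induction_on generalizing hist with
  | _ h ih =>
  cases h with
  | zero => simp [mechER_zero]
  | succ h =>
    rw [mechER_succ, mechER_succ]
    congr with v
    exact congrArg _ (ih _ (by omega) _)

theorem mechER_consFreeDay_succ_nil (M : Mech 𝕀 csg) (h : ℕ) :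
    𝓔 M.consFreeDay (h + 1) [] = 1 / 2 + 𝓔 M h [] :=
  mechER_succ_of_au_eq_freeDay _ rfl fun _ => mechER_consFreeDay_cons M h _ []

theorem mechER_le_optRental (M : Mech 𝕀 csg) (h : ℕ) : 𝓔 M h [] ≤ 𝓡 h :=
  le_csSup ⟨h, by rintro _ ⟨M', rfl⟩; exact mechER_le M' h []⟩ ⟨M, rfl⟩

theorem optRental_add_half_le (h : ℕ) : 𝓡 h + 1 / 2 ≤ 𝓡 (h + 1) := by
  suffices 𝓡 h ≤ 𝓡 (h + 1) - 1 / 2 by linarith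
  refine csSup_le ⟨_, freeDayMech, rfl⟩ ?_
  rintro _ ⟨M, rfl⟩
  have := mechER_le_optRental M.consFreeDay (h + 1)
  rw [mechER_consFreeDay_succ_nil] at this
  linarith

theorem optRental_add_le (a d : ℕ) : 𝓡 a + d / 2 ≤ 𝓡 (a + d) := by
  induction d with
  | zero => simp
  | succ d ih =>
    have := optRental_add_half_le (a + d)
    push_cast
    rw [← add_assoc]
    linarith

theorem overTimeCost_ge {n L : ℕ} (hL : L ≤ n) :
    (((max L 1 : ℕ) : ℝ) - 1) / 2 ≤ overTimeCost 𝕀 csg (fun _ => unif01) n L := by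
  have h := optRental_add_le (n - max L 1) (max L 1 - 1)
  rw [show n - max L 1 + (max L 1 - 1) = n - 1 by omega,
    Nat.cast_sub (le_max_right L 1), Nat.cast_one] at h
  rw [overTimeCost]
  linarith

theorem ER_freeDay {n : ℕ} (hn : 1 ≤ n) :
    ER unif01 csg (overTimeCost 𝕀 csg (fun _ => unif01) n) (freeDay n) = 1 / 2 := by
  simp only [ER, SWAC.R_csg, freeDay_uA hn, freeDay_XA hn, overTimeCost, max_self, sub_self,
    sub_zero, integral_id_unif01]

theorem FixedRate.ER_overTimeCost_le {n : ℕ} {A : SWAC n 𝕀} (hA : FixedRate A) :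
    ER unif01 csg (overTimeCost 𝕀 csg (fun _ => unif01) n) A ≤ 1 / 2 := by
  rw [ER, ← zero_add (1 / 2 : ℝ)]
  refine hA.integral_le_add_half le_rfl fun v hv => ?_
  rw [SWAC.R_csg]
  linarith [overTimeCost_ge (L := A.XA v) (A.len_le _ (A.bid_mem v hv))]

end Rental

/-- In the setting `S_n` (valuations uniform on `[0,1]`, consumer
surplus reward, over-time cost of the `n`-day i.i.d. rental game):
(1) among fixed-rate SWACs it is w.l.o.g. optimal to sell exactly one unit to every
agent for free, achieving expected reward `1/2`;
(2) the optimal `n`-day rental reward satisfies `R_n ≥ n/2`; and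
(3) the optimal expected reward among fixed-rate rental mechanisms is exactly `n/2`. -/
theorem uniform_consumer_surplus_fixed_rate_benchmarks
    (n : ℕ) (hn : 1 ≤ n) :
    (∃ A : SWAC n (Set.Icc (0 : ℝ) 1),
      (∀ b, A.sched b = [0]) ∧ Truthful A ∧ FixedRate A ∧
      TieFavor csg (overTimeCost (Set.Icc (0 : ℝ) 1) csg (fun _ => unif01) n) A ∧
      ER unif01 csg (overTimeCost (Set.Icc (0 : ℝ) 1) csg (fun _ => unif01) n) A = 1 / 2 ∧
      (∀ A' : SWAC n (Set.Icc (0 : ℝ) 1), FixedRate A' →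
        TieFavor csg (overTimeCost (Set.Icc (0 : ℝ) 1) csg (fun _ => unif01) n) A' →
        ER unif01 csg (overTimeCost (Set.Icc (0 : ℝ) 1) csg (fun _ => unif01) n) A' ≤
          ER unif01 csg (overTimeCost (Set.Icc (0 : ℝ) 1) csg (fun _ => unif01) n) A)) ∧
    ((n : ℝ) / 2 ≤ optRental (Set.Icc (0 : ℝ) 1) csg (fun _ => unif01) n) ∧
    (sSup {x : ℝ | ∃ M : Mech (Set.Icc (0 : ℝ) 1) csg,
        (∀ (h : ℕ) (hist : List ℝ), FixedRate (M.au h hist)) ∧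
        x = mechER (Set.Icc (0 : ℝ) 1) csg (fun _ => unif01) M n []} = (n : ℝ) / 2) := by
  refine ⟨⟨freeDay n, freeDay_sched hn, ⟨rfl, fun _ _ => rfl⟩, freeDay_fixedRate n,
    freeDay_tieFavor n _ _, ER_freeDay hn,
    fun A' hA' _ => (ER_freeDay hn).symm ▸ hA'.ER_overTimeCost_le⟩, ?_, ?_⟩
  · have hR0 := mechER_le_optRental freeDayMech 0
    have hRn := optRental_add_le 0 n
    rw [mechER_freeDayMech] at hR0
    simp only [zero_add, Nat.cast_zero, zero_div] at hRn hR0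
    linarith
  · refine IsGreatest.csSup_eq ⟨⟨freeDayMech, fun _ _ => freeDay_fixedRate _,
      (mechER_freeDayMech n []).symm⟩, ?_⟩
    rintro _ ⟨M, hM, rfl⟩
    exact mechER_le_half M hM n []

end RentalGame
end
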